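/- arXiv:2508.13848 — 4 statements merged into one kernel-verified Lean document; each statement's English description precedes it below -/
import Mathlib

section
/- Single time point g-formula: let (L, Y₀, A, Y₁) be discrete random variables on a probability space, with counterfactuals Y₁^a for a ∈ {0,1}. Assume (i) consistency: A = a implies Y₁ = Y₁^a almost surely; (ii) exchangeability: Y₁^a ⊥ A | (L, Y₀) for each a ∈ {0,1}; (iii) positivity: P(A = a | L = l, Y₀ = y) > 0 whenever P(L = l, Y₀ = y) > 0. Then for the add-on-j regime (which assigns treatment g_j(Y₀, A)), E[Y₁^{g_j}] = Σ_{l,y,a} E[Y₁ | L = l, Y₀ = y, A = g_j(y,a)] · P(L = l, Y₀ = y, A = a), where Y₁^{g_j} := Σ_{a'} 1{g_j(Y₀,A) = a'} Y₁^{a'}. -/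
open Finset
open scoped NNReal Classical

noncomputable section

/-- The add-on-`j` regime assignment rule. -/
def addOn (j : Bool) (y : ℝ≥0) (a : Bool) : Bool := if 0 < y then j else a

variable {Ω : Type*} [Fintype Ω]

/-- Probability of an event under the mass function `p` on a finite sample space. -/
def Pr (p : Ω → ℝ) (E : Ω → Prop) : ℝ := ∑ ω, if E ω then p ω else 0

/-- Expectation of a real random variable under `p`. -/
def Ex (p : Ω → ℝ) (f : Ω → ℝ) : ℝ := ∑ ω, p ω * f ω

/-- Conditional expectation of `f` given the event `E` (0 when `Pr p E = 0`). -/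
def CE (p : Ω → ℝ) (f : Ω → ℝ) (E : Ω → Prop) : ℝ :=
  (∑ ω, if E ω then p ω * f ω else 0) / Pr p E

/-- Conditional probability of `E` given `F` (0 when `Pr p F = 0`). -/
def CPr (p : Ω → ℝ) (E F : Ω → Prop) : ℝ := Pr p (fun ω => E ω ∧ F ω) / Pr p F


section Aux

variable {Ω : Type*} [Fintype Ω]

/-- Expectation of `f` restricted to the event `E`. -/
def PE (p : Ω → ℝ) (f : Ω → ℝ) (E : Ω → Prop) : ℝ := ∑ ω, if E ω then p ω * f ω else 0

lemma CE_eq (p : Ω → ℝ) (f : Ω → ℝ) (E : Ω → Prop) : CE p f E = PE p f E / Pr p E := rfl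

lemma PE_congr (p : Ω → ℝ) (f g : Ω → ℝ) (E F : Ω → Prop)
    (hEF : ∀ ω, E ω ↔ F ω) (hfg : ∀ ω, E ω → p ω * f ω = p ω * g ω) :
    PE p f E = PE p g F := by
  unfold PE
  refine Finset.sum_congr rfl fun ω _ => ?_
  by_cases h : E ω
  · rw [if_pos h, if_pos ((hEF ω).1 h), hfg ω h]
  · rw [if_neg h, if_neg (fun hF => h ((hEF ω).2 hF))]

lemma Pr_congr (p : Ω → ℝ) {E F : Ω → Prop} (h : ∀ ω, E ω ↔ F ω) :
    Pr p E = Pr p F :=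
  Finset.sum_congr rfl fun ω _ => if_congr (h ω) rfl rfl

lemma Pr_nonneg (p : Ω → ℝ) (hp : ∀ ω, 0 ≤ p ω) (E : Ω → Prop) : 0 ≤ Pr p E :=
  Finset.sum_nonneg fun ω _ => by by_cases h : E ω <;> simp [h, hp ω]

lemma p_eq_zero_of_Pr_zero (p : Ω → ℝ) (hp : ∀ ω, 0 ≤ p ω) (E : Ω → Prop)
    (h : Pr p E = 0) : ∀ ω, E ω → p ω = 0 := by
  intro ω hω
  have := (Finset.sum_eq_zero_iff_of_nonneg
    (fun ω _ => by by_cases h : E ω <;> simp [h, hp ω])).1 h ω (Finset.mem_univ ω)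
  simpa [hω] using this

lemma PE_eq_zero (p : Ω → ℝ) (f : Ω → ℝ) (E : Ω → Prop)
    (h : ∀ ω, E ω → p ω = 0) : PE p f E = 0 :=
  Finset.sum_eq_zero fun ω _ => by
    by_cases hE : E ω
    · simp [hE, h ω hE]
    · simp [hE]

lemma Pr_eq_zero (p : Ω → ℝ) (E : Ω → Prop)
    (h : ∀ ω, E ω → p ω = 0) : Pr p E = 0 :=
  Finset.sum_eq_zero fun ω _ => by
    by_cases hE : E ω
    · simp [hE, h ω hE]
    · simp [hE]

lemma expand_exp (p : Ω → ℝ) (g : Ω → ℝ) (E : Ω → Prop) :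
    PE p g E = ∑ v ∈ Finset.image g Finset.univ, v * Pr p (fun ω => g ω = v ∧ E ω) := by
  unfold PE Pr
  rw [eq_comm]
  simp only [Finset.mul_sum]
  rw [Finset.sum_comm]
  refine Finset.sum_congr rfl fun ω _ => ?_
  rw [Finset.sum_eq_single (g ω)]
  · by_cases h : E ω <;> simp [h, mul_comm]
  · intro v _ hv
    simp [Ne.symm hv]
  · intro h
    exact absurd (Finset.mem_image_of_mem g (Finset.mem_univ ω)) h

end Aux

/-- Single time point g-formula for the add-on-`j` regime. -/
theorem addOn_g_formula {L' : Type*} [Fintype L']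
    (p : Ω → ℝ) (hp : ∀ ω, 0 ≤ p ω) (hp1 : ∑ ω, p ω = 1)
    (L : Ω → L') (Y0 : Ω → ℝ≥0) (A : Ω → Bool) (Y1 : Ω → ℝ)
    (Y1cf : Bool → Ω → ℝ) (j : Bool)
    -- consistency: A = a implies Y₁ = Y₁ᵃ almost surely
    (hcons : ∀ ω, 0 < p ω → ∀ a : Bool, A ω = a → Y1 ω = Y1cf a ω)
    -- exchangeability: Y₁ᵃ ⊥ A | (L, Y₀) for each a
    (hexch : ∀ (a a' : Bool) (v : ℝ) (l : L') (y : ℝ≥0),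
      Pr p (fun ω => Y1cf a ω = v ∧ A ω = a' ∧ L ω = l ∧ Y0 ω = y) *
        Pr p (fun ω => L ω = l ∧ Y0 ω = y) =
      Pr p (fun ω => Y1cf a ω = v ∧ L ω = l ∧ Y0 ω = y) *
        Pr p (fun ω => A ω = a' ∧ L ω = l ∧ Y0 ω = y))
    -- positivity: P(A = a | L = l, Y₀ = y) > 0 whenever P(L = l, Y₀ = y) > 0
    (hpos : ∀ (l : L') (y : ℝ≥0) (a : Bool),
      0 < Pr p (fun ω => L ω = l ∧ Y0 ω = y) →
      0 < CPr p (fun ω => A ω = a) (fun ω => L ω = l ∧ Y0 ω = y)) :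
    Ex p (fun ω => ∑ a' : Bool, (if addOn j (Y0 ω) (A ω) = a' then (1 : ℝ) else 0) * Y1cf a' ω) =
      ∑ l : L', ∑ y ∈ Finset.image Y0 Finset.univ, ∑ a : Bool,
        CE p Y1 (fun ω => L ω = l ∧ Y0 ω = y ∧ A ω = addOn j y a) *
          Pr p (fun ω => L ω = l ∧ Y0 ω = y ∧ A ω = a) := by
  classical
  set G : Ω → ℝ := fun ω => Y1cf (addOn j (Y0 ω) (A ω)) ω with hG
  have hGω : ∀ ω, G ω = Y1cf (addOn j (Y0 ω) (A ω)) ω := fun ω => rfl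
  -- exchangeability in expectation form
  have hexch' : ∀ (b a' : Bool) (l : L') (y : ℝ≥0),
      PE p (Y1cf b) (fun ω => A ω = a' ∧ L ω = l ∧ Y0 ω = y) *
        Pr p (fun ω => L ω = l ∧ Y0 ω = y) =
      PE p (Y1cf b) (fun ω => L ω = l ∧ Y0 ω = y) *
        Pr p (fun ω => A ω = a' ∧ L ω = l ∧ Y0 ω = y) := by
    intro b a' l y
    simp only [expand_exp]
    rw [Finset.sum_mul, Finset.sum_mul]
    refine Finset.sum_congr rfl fun v _ => ?_
    rw [mul_assoc, mul_assoc, hexch b a' v l y]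
  -- step 1: simplify the indicator sum
  have hLHS : Ex p (fun ω => ∑ a' : Bool,
      (if addOn j (Y0 ω) (A ω) = a' then (1 : ℝ) else 0) * Y1cf a' ω) = ∑ ω, p ω * G ω := by
    unfold Ex
    refine Finset.sum_congr rfl fun ω _ => ?_
    show p ω * (∑ a' : Bool,
      (if addOn j (Y0 ω) (A ω) = a' then (1 : ℝ) else 0) * Y1cf a' ω) = p ω * G ω
    rw [hGω ω]
    congr 1
    rw [Finset.sum_eq_single (addOn j (Y0 ω) (A ω))]
    · simp
    · intro c _ hc; simp [Ne.symm hc]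
    · simp
  rw [hLHS]
  -- step 2: decompose over cells
  have hdec : (∑ ω, p ω * G ω) =
      ∑ l : L', ∑ y ∈ Finset.image Y0 Finset.univ, ∑ a : Bool,
        PE p G (fun ω => L ω = l ∧ Y0 ω = y ∧ A ω = a) := by
    rw [eq_comm]
    unfold PE
    refine Eq.trans (Finset.sum_congr rfl fun l _ =>
      Finset.sum_congr rfl fun y _ => Finset.sum_comm) ?_
    refine Eq.trans (Finset.sum_congr rfl fun l _ => Finset.sum_comm) ?_
    refine Eq.trans Finset.sum_comm ?_
    refine Finset.sum_congr rfl fun ω _ => ?_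
    refine Eq.trans (Finset.sum_eq_single (L ω)
      (fun l _ hl => Finset.sum_eq_zero fun y _ => Finset.sum_eq_zero fun a _ =>
        if_neg (by rintro ⟨h1, -⟩; exact hl h1.symm))
      (fun h => absurd (Finset.mem_univ _) h)) ?_
    refine Eq.trans (Finset.sum_eq_single (Y0 ω)
      (fun y _ hyy => Finset.sum_eq_zero fun a _ =>
        if_neg (by rintro ⟨-, h2, -⟩; exact hyy h2.symm))
      (fun h => absurd (Finset.mem_image_of_mem Y0 (Finset.mem_univ ω)) h)) ?_
    refine Eq.trans (Finset.sum_eq_single (A ω)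
      (fun c _ hc => if_neg (by rintro ⟨-, -, h3⟩; exact hc h3.symm))
      (fun h => absurd (Finset.mem_univ _) h)) ?_
    exact if_pos ⟨rfl, rfl, rfl⟩
  rw [hdec]
  -- step 3: per-cell identity
  refine Finset.sum_congr rfl fun l _ => Finset.sum_congr rfl fun y hy =>
    Finset.sum_congr rfl fun a _ => ?_
  set b : Bool := addOn j y a with hb
  have hcell : PE p G (fun ω => L ω = l ∧ Y0 ω = y ∧ A ω = a) =
      PE p (Y1cf b) (fun ω => A ω = a ∧ L ω = l ∧ Y0 ω = y) := by
    refine PE_congr p G (Y1cf b) _ _ (fun ω => by tauto) fun ω h => ?_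
    rw [hGω ω, h.2.1, h.2.2, hb]
  rw [hcell]
  set PLY := Pr p (fun ω => L ω = l ∧ Y0 ω = y) with hPLY
  have hPLYnn : 0 ≤ PLY := Pr_nonneg p hp _
  rcases eq_or_lt_of_le hPLYnn with hz | hpos'
  · -- degenerate cell: everything vanishes
    have hz' := p_eq_zero_of_Pr_zero p hp _ hz.symm
    rw [PE_eq_zero p (Y1cf b) _ (fun ω h => hz' ω ⟨h.2.1, h.2.2⟩),
      Pr_eq_zero p _ (fun ω h => hz' ω ⟨h.1, h.2.1⟩), mul_zero]
  · -- nondegenerate cell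
    have hQb : 0 < Pr p (fun ω => A ω = b ∧ L ω = l ∧ Y0 ω = y) := by
      have h1 := hpos l y b hpos'
      unfold CPr at h1
      rw [← hPLY] at h1
      have h2 := mul_pos h1 hpos'
      rw [div_mul_cancel₀ _ (ne_of_gt hpos')] at h2
      exact lt_of_lt_of_eq h2 (Pr_congr p fun ω => by tauto)
    set Qb := Pr p (fun ω => A ω = b ∧ L ω = l ∧ Y0 ω = y) with hQbdef
    set Pa := Pr p (fun ω => A ω = a ∧ L ω = l ∧ Y0 ω = y) with hPadef
    set Na := PE p (Y1cf b) (fun ω => A ω = a ∧ L ω = l ∧ Y0 ω = y) with hNa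
    set Nb := PE p (Y1cf b) (fun ω => A ω = b ∧ L ω = l ∧ Y0 ω = y) with hNb
    set N := PE p (Y1cf b) (fun ω => L ω = l ∧ Y0 ω = y) with hN
    have ha' : Na * PLY = N * Pa := hexch' b a l y
    have hb' : Nb * PLY = N * Qb := hexch' b b l y
    -- consistency: Nb equals the Y1-sum
    have hM : Nb = PE p Y1 (fun ω => A ω = b ∧ L ω = l ∧ Y0 ω = y) := by
      rw [hNb]
      refine PE_congr p (Y1cf b) Y1 _ _ (fun ω => Iff.rfl) fun ω h => ?_
      rcases eq_or_lt_of_le (hp ω) with hpz | hpz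
      · rw [← hpz, zero_mul, zero_mul]
      · rw [hcons ω hpz b h.1]
    -- rewrite the RHS CE and Pr with matching event orders
    have hCE : CE p Y1 (fun ω => L ω = l ∧ Y0 ω = y ∧ A ω = b) = Nb / Qb := by
      rw [CE_eq, hM, hQbdef]
      congr 1
      · exact PE_congr p Y1 Y1 _ _ (fun ω => by tauto) (fun ω _ => rfl)
      · exact Pr_congr p fun ω => by tauto
    have hPr : Pr p (fun ω => L ω = l ∧ Y0 ω = y ∧ A ω = a) = Pa := by
      rw [hPadef]; exact Pr_congr p fun ω => by tauto
    rw [hCE, hPr]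
    -- algebra: Na * Qb = Nb * Pa
    have key : Na * Qb = Nb * Pa := by
      have h1 : Na * Qb * PLY = Nb * Pa * PLY := by
        calc Na * Qb * PLY = (Na * PLY) * Qb := by ring
          _ = (N * Pa) * Qb := by rw [ha']
          _ = (N * Qb) * Pa := by ring
          _ = (Nb * PLY) * Pa := by rw [hb']
          _ = Nb * Pa * PLY := by ring
      exact mul_right_cancel₀ (ne_of_gt hpos') h1
    rw [div_mul_eq_mul_div, eq_div_iff (ne_of_gt hQb)]
    linarith [key]
end
end

section
/- Single time point IPW formula: under the setup of the single time point g-formula (consistency, exchangeability Y₁^a ⊥ A | (L,Y₀), and positivity), E[Y₁^{g_j}] = E[Y₁ · W] where W = Σ_{a ∈ {0,1}} 1{A = g_j(Y₀, a)} · P(A = a | L, Y₀) / P(A = A | L, Y₀), i.e., the weight W equals the sum over a of the indicator that the observed treatment equals the regime-assigned value for natural value a, times the propensity of a divided by the propensity of the observed treatment. -/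
open Finset
open scoped NNReal Classical

noncomputable section

variable {Ω : Type*} [Fintype Ω]

lemma indicator_sum_bool (b : Bool) (f : Bool → ℝ) :
    ∑ a : Bool, (if b = a then (1 : ℝ) else 0) * f a = f b := by
  cases b <;> simp [Fintype.sum_bool]

lemma sum_if_weight (p : Ω → ℝ) (g : Ω → ℝ) (E : Ω → Prop) :
    (∑ ω, if E ω then p ω * g ω else 0) =
      ∑ v ∈ Finset.image g Finset.univ, v * Pr p (fun ω => g ω = v ∧ E ω) := by
  unfold Pr
  simp_rw [Finset.mul_sum, mul_ite, mul_zero]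
  rw [Finset.sum_comm]
  refine Finset.sum_congr rfl fun ω _ => ?_
  rw [Finset.sum_eq_single (g ω)]
  · by_cases h : E ω <;> simp [h, mul_comm]
  · intro v _ hne
    simp only [ite_eq_right_iff]
    rintro ⟨h1, _⟩; exact absurd h1.symm hne
  · intro h
    exact absurd (Finset.mem_image_of_mem _ (Finset.mem_univ ω)) h

lemma sum_weight_eq (p : Ω → ℝ) (g : Ω → ℝ) (E F : Ω → Prop)
    (h : ∀ v : ℝ, Pr p (fun ω => g ω = v ∧ E ω) * Pr p F =
      Pr p (fun ω => g ω = v ∧ F ω) * Pr p E) :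
    (∑ ω, if E ω then p ω * g ω else 0) * Pr p F =
      (∑ ω, if F ω then p ω * g ω else 0) * Pr p E := by
  rw [sum_if_weight, sum_if_weight, Finset.sum_mul, Finset.sum_mul]
  refine Finset.sum_congr rfl fun v _ => ?_
  rw [mul_assoc, mul_assoc, h v]

/-- Single time point IPW identification formula for the add-on-`j` regime. -/
theorem addOn_ipw_formula {L' : Type*} [Fintype L']
    (p : Ω → ℝ) (hp : ∀ ω, 0 ≤ p ω) (hp1 : ∑ ω, p ω = 1)
    (L : Ω → L') (Y0 : Ω → ℝ≥0) (A : Ω → Bool) (Y1 : Ω → ℝ)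
    (Y1cf : Bool → Ω → ℝ) (j : Bool)
    -- consistency
    (hcons : ∀ ω, 0 < p ω → ∀ a : Bool, A ω = a → Y1 ω = Y1cf a ω)
    -- exchangeability: Y₁ᵃ ⊥ A | (L, Y₀)
    (hexch : ∀ (a a' : Bool) (v : ℝ) (l : L') (y : ℝ≥0),
      Pr p (fun ω => Y1cf a ω = v ∧ A ω = a' ∧ L ω = l ∧ Y0 ω = y) *
        Pr p (fun ω => L ω = l ∧ Y0 ω = y) =
      Pr p (fun ω => Y1cf a ω = v ∧ L ω = l ∧ Y0 ω = y) *
        Pr p (fun ω => A ω = a' ∧ L ω = l ∧ Y0 ω = y))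
    -- positivity
    (hpos : ∀ (l : L') (y : ℝ≥0) (a : Bool),
      0 < Pr p (fun ω => L ω = l ∧ Y0 ω = y) →
      0 < CPr p (fun ω => A ω = a) (fun ω => L ω = l ∧ Y0 ω = y)) :
    Ex p (fun ω => ∑ a' : Bool, (if addOn j (Y0 ω) (A ω) = a' then (1 : ℝ) else 0) * Y1cf a' ω) =
      Ex p (fun ω => Y1 ω *
        ∑ a : Bool, (if A ω = addOn j (Y0 ω) a then (1 : ℝ) else 0) *
          CPr p (fun ω' => A ω' = a) (fun ω' => L ω' = L ω ∧ Y0 ω' = Y0 ω) /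
          CPr p (fun ω' => A ω' = A ω) (fun ω' => L ω' = L ω ∧ Y0 ω' = Y0 ω)) := by
  classical
  have strat : ∀ F : Ω → ℝ, (∑ ω, F ω) =
      ∑ q ∈ Finset.image (fun ω => (L ω, Y0 ω)) Finset.univ,
        ∑ ω, if L ω = q.1 ∧ Y0 ω = q.2 then F ω else 0 := by
    intro F
    rw [Finset.sum_comm]
    refine Finset.sum_congr rfl fun ω _ => ?_
    rw [Finset.sum_eq_single (L ω, Y0 ω)]
    · simp
    · intro q _ hne
      simp only [ite_eq_right_iff]
      rintro ⟨h1, h2⟩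
      exact absurd (Prod.ext h1.symm h2.symm) hne
    · intro h
      exact absurd (Finset.mem_image_of_mem _ (Finset.mem_univ ω)) h
  unfold Ex
  rw [strat, strat]
  refine Finset.sum_congr rfl fun q _ => ?_
  obtain ⟨l, y⟩ := q
  set Sly : Ω → Prop := fun ω => L ω = l ∧ Y0 ω = y with hSly
  -- canonical forms of both sides of the stratum equality
  have Lstep : (∑ ω, if Sly ω then
        p ω * (∑ a' : Bool, (if addOn j (Y0 ω) (A ω) = a' then (1 : ℝ) else 0) * Y1cf a' ω)
        else 0) =
      ∑ ω, if Sly ω then p ω * Y1cf (addOn j y (A ω)) ω else 0 := by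
    refine Finset.sum_congr rfl fun ω _ => ?_
    split_ifs with h
    · rw [h.2, indicator_sum_bool]
    · rfl
  have Rstep : (∑ ω, if Sly ω then
        p ω * (Y1 ω * ∑ a : Bool, (if A ω = addOn j (Y0 ω) a then (1 : ℝ) else 0) *
          CPr p (fun ω' => A ω' = a) (fun ω' => L ω' = L ω ∧ Y0 ω' = Y0 ω) /
          CPr p (fun ω' => A ω' = A ω) (fun ω' => L ω' = L ω ∧ Y0 ω' = Y0 ω)) else 0) =
      ∑ ω, if Sly ω then
        p ω * (Y1 ω * ∑ a : Bool, (if A ω = addOn j y a then (1 : ℝ) else 0) *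
          CPr p (fun ω' => A ω' = a) Sly / CPr p (fun ω' => A ω' = A ω) Sly) else 0 := by
    refine Finset.sum_congr rfl fun ω _ => ?_
    split_ifs with h
    · rw [h.1, h.2]
    · rfl
  rw [Lstep, Rstep]
  by_cases hPrS : 0 < Pr p Sly
  · -- positive stratum
    have hPa : ∀ a, 0 < CPr p (fun ω => A ω = a) Sly := fun a => hpos l y a hPrS
    have hPaSum : (∑ a : Bool, CPr p (fun ω => A ω = a) Sly) = 1 := by
      unfold CPr
      rw [← Finset.sum_div]
      rw [div_eq_one_iff_eq (ne_of_gt hPrS)]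
      unfold Pr
      rw [Finset.sum_comm]
      refine Finset.sum_congr rfl fun ω _ => ?_
      by_cases hA : A ω <;> by_cases hs : Sly ω <;>
        simp [Fintype.sum_bool, hA, hs]
    by_cases hy : 0 < y
    · -- regime forces treatment j on this stratum
      have haddOn : ∀ a, addOn j y a = j := fun a => by simp [addOn, hy]
      simp only [haddOn]
      -- simplify RHS integrand
      have Rstep2 : (∑ ω, if Sly ω then
          p ω * (Y1 ω * ∑ a : Bool, (if A ω = j then (1 : ℝ) else 0) *
            CPr p (fun ω' => A ω' = a) Sly / CPr p (fun ω' => A ω' = A ω) Sly) else 0) =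
          ∑ ω, if A ω = j ∧ Sly ω then
            p ω * Y1cf j ω / CPr p (fun ω' => A ω' = j) Sly else 0 := by
        refine Finset.sum_congr rfl fun ω _ => ?_
        by_cases hs : Sly ω
        · by_cases hA : A ω = j
          · simp only [hs, hA, if_true, and_self, if_pos]
            rcases lt_or_eq_of_le (hp ω) with hpω | hpω
            · rw [← hcons ω hpω j hA]
              simp only [if_true, one_mul]
              rw [← Finset.sum_div, hPaSum]
              field_simp
            · rw [← hpω]; simp
          · simp [hs, hA]
        · simp [hs]
      rw [Rstep2]
      -- exchangeability step
      have key := sum_weight_eq p (Y1cf j) (fun ω => A ω = j ∧ Sly ω) Sly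
        (fun v => hexch j j v l y)
      beta_reduce at key
      have hconv : (∑ ω, if A ω = j ∧ Sly ω then
            p ω * Y1cf j ω / CPr p (fun ω' => A ω' = j) Sly else 0) =
          (∑ ω, if A ω = j ∧ Sly ω then p ω * Y1cf j ω else 0) /
            CPr p (fun ω' => A ω' = j) Sly := by
        rw [Finset.sum_div]
        refine Finset.sum_congr rfl fun ω _ => ?_
        split_ifs <;> simp
      rw [hconv]
      rw [eq_div_iff (ne_of_gt (hPa j))]
      have hCPr : CPr p (fun ω' => A ω' = j) Sly =
          Pr p (fun ω => A ω = j ∧ Sly ω) / Pr p Sly := rfl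
      rw [hCPr, mul_div_assoc', div_eq_iff (ne_of_gt hPrS)]
      convert key.symm using 2 <;>
        exact Finset.sum_congr rfl fun ω _ => by split_ifs <;> rfl
    · -- y = 0 : regime equals natural treatment, weight = 1
      have haddOn : ∀ a : Bool, addOn j y a = a := fun a => by simp [addOn, hy]
      simp only [haddOn]
      refine Finset.sum_congr rfl fun ω _ => ?_
      split_ifs with hs
      · have hw : (∑ a : Bool, (if A ω = a then (1 : ℝ) else 0) *
            CPr p (fun ω' => A ω' = a) Sly / CPr p (fun ω' => A ω' = A ω) Sly) = 1 := by
          rw [← Finset.sum_div, indicator_sum_bool (A ω)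
            (fun a => CPr p (fun ω' => A ω' = a) Sly)]
          exact div_self (ne_of_gt (hPa (A ω)))
        rw [hw, mul_one]
        rcases lt_or_eq_of_le (hp ω) with hpω | hpω
        · rw [← hcons ω hpω (A ω) rfl]
        · rw [← hpω]; ring
      · rfl
  · -- zero-probability stratum: all weights vanish
    have hz : ∀ ω, Sly ω → p ω = 0 := by
      have h0 : Pr p Sly = 0 := by
        have : 0 ≤ Pr p Sly := by
          unfold Pr
          refine Finset.sum_nonneg fun ω _ => ?_
          split_ifs; exacts [hp ω, le_rfl]
        linarith [lt_or_eq_of_le this]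
      intro ω hs
      have := (Finset.sum_eq_zero_iff_of_nonneg (fun ω _ => by
        split_ifs; exacts [hp ω, le_rfl])).mp h0 ω (Finset.mem_univ ω)
      have h2 : Sly ω → p ω = 0 := by simpa using this
      exact h2 hs
    rw [Finset.sum_eq_zero, Finset.sum_eq_zero] <;>
      · intro ω _
        split_ifs with hs
        · rw [hz ω hs]; ring
        · rfl
end
end

section
/- Equivalence of g-formula and IPW: for discrete random variables (L, Y₀, A, Y₁) with positivity (P(A = a | L = l, Y₀ = y) > 0 whenever P(L = l, Y₀ = y) > 0), the g-formula functional Σ_{l,y,a} E[Y₁ | L=l, Y₀=y, A=g_j(y,a)] P(L=l, Y₀=y, A=a) equals the IPW functional E[Y₁ · Σ_a 1{A = g_j(Y₀,a)} P(A=a | L,Y₀) / P(A = A | L,Y₀)]. This identity holds purely algebraically without any counterfactual assumptions. -/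
open Finset
open scoped NNReal Classical

noncomputable section

variable {Ω : Type*} [Fintype Ω]

/-- Algebraic equivalence of the g-formula functional and the IPW functional
under positivity alone, with no counterfactual assumptions. -/
theorem gformula_eq_ipw {L' : Type*} [Fintype L']
    (p : Ω → ℝ) (hp : ∀ ω, 0 ≤ p ω) (hp1 : ∑ ω, p ω = 1)
    (L : Ω → L') (Y0 : Ω → ℝ≥0) (A : Ω → Bool) (Y1 : Ω → ℝ) (j : Bool)
    -- positivity
    (hpos : ∀ (l : L') (y : ℝ≥0) (a : Bool),
      0 < Pr p (fun ω => L ω = l ∧ Y0 ω = y) →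
      0 < CPr p (fun ω => A ω = a) (fun ω => L ω = l ∧ Y0 ω = y)) :
    (∑ l : L', ∑ y ∈ Finset.image Y0 Finset.univ, ∑ a : Bool,
        CE p Y1 (fun ω => L ω = l ∧ Y0 ω = y ∧ A ω = addOn j y a) *
          Pr p (fun ω => L ω = l ∧ Y0 ω = y ∧ A ω = a)) =
      Ex p (fun ω => Y1 ω *
        ∑ a : Bool, (if A ω = addOn j (Y0 ω) a then (1 : ℝ) else 0) *
          CPr p (fun ω' => A ω' = a) (fun ω' => L ω' = L ω ∧ Y0 ω' = Y0 ω) /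
          CPr p (fun ω' => A ω' = A ω) (fun ω' => L ω' = L ω ∧ Y0 ω' = Y0 ω)) := by
  classical
  set S : Finset ℝ≥0 := Finset.image Y0 Finset.univ with hS
  set q : L' → ℝ≥0 → Bool → ℝ := fun l y a =>
    CPr p (fun ω => A ω = a) (fun ω => L ω = l ∧ Y0 ω = y) with hq
  have hite : ∀ (E : Ω → Prop) (ω : Ω), 0 ≤ if E ω then p ω else 0 := by
    intro E ω; split <;> simp [hp ω]
  have hPrnn : ∀ E : Ω → Prop, 0 ≤ Pr p E := fun E => Finset.sum_nonneg fun ω _ => hite E ω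
  have hPr0 : ∀ (E : Ω → Prop), Pr p E = 0 → ∀ ω, E ω → p ω = 0 := by
    intro E hE ω hω
    have h := (Finset.sum_eq_zero_iff_of_nonneg fun ω _ => hite E ω).mp hE ω (Finset.mem_univ ω)
    simpa [hω] using h
  have key : ∀ (l : L') (y : ℝ≥0) (a : Bool),
      CE p Y1 (fun ω => L ω = l ∧ Y0 ω = y ∧ A ω = addOn j y a) *
        Pr p (fun ω => L ω = l ∧ Y0 ω = y ∧ A ω = a)
      = (∑ ω, if L ω = l ∧ Y0 ω = y ∧ A ω = addOn j y a then p ω * Y1 ω else 0) *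
        (q l y a / q l y (addOn j y a)) := by
    intro l y a
    have hcomm : ∀ b : Bool,
        Pr p (fun ω => A ω = b ∧ (L ω = l ∧ Y0 ω = y))
        = Pr p (fun ω => L ω = l ∧ Y0 ω = y ∧ A ω = b) := by
      intro b
      congr 1
      funext ω
      exact propext (by tauto)
    by_cases h0 : Pr p (fun ω => L ω = l ∧ Y0 ω = y) = 0
    · have hz : ∀ ω, L ω = l ∧ Y0 ω = y → p ω = 0 := hPr0 _ h0
      have h1 : Pr p (fun ω => L ω = l ∧ Y0 ω = y ∧ A ω = a) = 0 := by
        apply Finset.sum_eq_zero; intro ω _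
        split
        · next h => exact hz ω ⟨h.1, h.2.1⟩
        · rfl
      have h2 : (∑ ω, if L ω = l ∧ Y0 ω = y ∧ A ω = addOn j y a then p ω * Y1 ω else 0) = 0 := by
        apply Finset.sum_eq_zero; intro ω _
        split
        · next h => rw [hz ω ⟨h.1, h.2.1⟩, zero_mul]
        · rfl
      rw [h1, h2, mul_zero, zero_mul]
    · have hy : 0 < Pr p (fun ω => L ω = l ∧ Y0 ω = y) := lt_of_le_of_ne (hPrnn _) (Ne.symm h0)
      have hqg : 0 < q l y (addOn j y a) := hpos l y (addOn j y a) hy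
      have hqg' : q l y (addOn j y a)
          = Pr p (fun ω => L ω = l ∧ Y0 ω = y ∧ A ω = addOn j y a)
            / Pr p (fun ω => L ω = l ∧ Y0 ω = y) := by
        simp only [hq, CPr]
        rw [hcomm]
      have hqa : q l y a
          = Pr p (fun ω => L ω = l ∧ Y0 ω = y ∧ A ω = a)
            / Pr p (fun ω => L ω = l ∧ Y0 ω = y) := by
        simp only [hq, CPr]
        rw [hcomm]
      have hPg : 0 < Pr p (fun ω => L ω = l ∧ Y0 ω = y ∧ A ω = addOn j y a) := by
        have h3 := hqg
        rw [hqg'] at h3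
        have h4 := mul_pos h3 hy
        rwa [div_mul_cancel₀ _ h0] at h4
      rw [hqg', hqa]
      unfold CE
      rw [div_div_div_cancel_right₀ (c := Pr p (fun ω => L ω = l ∧ Y0 ω = y)) h0]
      beta_reduce
      ring
  calc (∑ l : L', ∑ y ∈ S, ∑ a : Bool,
        CE p Y1 (fun ω => L ω = l ∧ Y0 ω = y ∧ A ω = addOn j y a) *
          Pr p (fun ω => L ω = l ∧ Y0 ω = y ∧ A ω = a))
      = ∑ l : L', ∑ y ∈ S, ∑ a : Bool, ∑ ω,
          (if L ω = l ∧ Y0 ω = y ∧ A ω = addOn j y a then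
            p ω * Y1 ω * (q l y a / q l y (addOn j y a)) else 0) := by
        refine Finset.sum_congr rfl fun l _ => Finset.sum_congr rfl fun y _ =>
          Finset.sum_congr rfl fun a _ => ?_
        rw [key l y a, Finset.sum_mul]
        exact Finset.sum_congr rfl fun ω _ => by rw [ite_mul, zero_mul]
    _ = ∑ ω, ∑ l : L', ∑ y ∈ S, ∑ a : Bool,
          (if L ω = l ∧ Y0 ω = y ∧ A ω = addOn j y a then
            p ω * Y1 ω * (q l y a / q l y (addOn j y a)) else 0) := by
        rw [show (∑ l : L', ∑ y ∈ S, ∑ a : Bool, ∑ ω,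
          (if L ω = l ∧ Y0 ω = y ∧ A ω = addOn j y a then
            p ω * Y1 ω * (q l y a / q l y (addOn j y a)) else 0))
          = ∑ l : L', ∑ y ∈ S, ∑ ω, ∑ a : Bool,
          (if L ω = l ∧ Y0 ω = y ∧ A ω = addOn j y a then
            p ω * Y1 ω * (q l y a / q l y (addOn j y a)) else 0) from
          Finset.sum_congr rfl fun l _ => Finset.sum_congr rfl fun y _ => Finset.sum_comm]
        rw [show (∑ l : L', ∑ y ∈ S, ∑ ω, ∑ a : Bool,
          (if L ω = l ∧ Y0 ω = y ∧ A ω = addOn j y a then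
            p ω * Y1 ω * (q l y a / q l y (addOn j y a)) else 0))
          = ∑ l : L', ∑ ω, ∑ y ∈ S, ∑ a : Bool,
          (if L ω = l ∧ Y0 ω = y ∧ A ω = addOn j y a then
            p ω * Y1 ω * (q l y a / q l y (addOn j y a)) else 0) from
          Finset.sum_congr rfl fun l _ => Finset.sum_comm]
        exact Finset.sum_comm
    _ = ∑ ω, ∑ a : Bool,
          (if A ω = addOn j (Y0 ω) a then
            p ω * Y1 ω * (q (L ω) (Y0 ω) a / q (L ω) (Y0 ω) (addOn j (Y0 ω) a)) else 0) := by
        refine Finset.sum_congr rfl fun ω _ => ?_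
        rw [Finset.sum_eq_single (L ω)]
        · rw [Finset.sum_eq_single (Y0 ω)]
          · refine Finset.sum_congr rfl fun a _ => ?_
            refine if_congr ?_ rfl rfl
            constructor
            · rintro ⟨_, _, h⟩; exact h
            · intro h; exact ⟨rfl, rfl, h⟩
          · intro y _ hy
            apply Finset.sum_eq_zero; intro a _
            rw [if_neg]; tauto
          · intro h
            exact absurd (Finset.mem_image_of_mem Y0 (Finset.mem_univ ω)) h
        · intro l _ hl
          apply Finset.sum_eq_zero; intro y _
          apply Finset.sum_eq_zero; intro a _
          rw [if_neg]; tauto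
        · intro h; exact absurd (Finset.mem_univ (L ω)) h
    _ = Ex p (fun ω => Y1 ω *
        ∑ a : Bool, (if A ω = addOn j (Y0 ω) a then (1 : ℝ) else 0) *
          CPr p (fun ω' => A ω' = a) (fun ω' => L ω' = L ω ∧ Y0 ω' = Y0 ω) /
          CPr p (fun ω' => A ω' = A ω) (fun ω' => L ω' = L ω ∧ Y0 ω' = Y0 ω)) := by
        unfold Ex
        refine Finset.sum_congr rfl fun ω _ => ?_
        dsimp only
        simp only [hq]
        rw [Finset.mul_sum, Finset.mul_sum]
        refine Finset.sum_congr rfl fun a _ => ?_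
        by_cases h : A ω = addOn j (Y0 ω) a
        · rw [if_pos h, if_pos h, h]
          ring
        · rw [if_neg h, if_neg h]
          simp
end
end

section
/- Exchangeability transfer to regime counterfactual: let Y^0, Y^1, A be random variables with A ∈ {0,1}, and let Z be a random vector such that (Y^0, Y^1) ⊥ A | Z jointly. Let h : range(Z) × {0,1} → {0,1} be measurable and define the regime counterfactual Y^h = Σ_a 1{h(Z, A) = a} Y^a. Then E[Y^h] = E[ Σ_a 1{A = a} E[Y^{h(Z,a)} | Z] ] = Σ_z Σ_a P(Z = z, A = a) E[Y^{h(z,a)} | Z = z], i.e., the mean of the regime counterfactual is identified by conditional means of the static counterfactuals given Z alone, using joint (not merely marginal) conditional independence. -/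
open Finset
open scoped NNReal Classical

noncomputable section

variable {Ω : Type*} [Fintype Ω]

/-- `ite` congruence across possibly different `Decidable` instances. -/
theorem ite_iff_congr {α : Sort*} {c d : Prop} {i1 : Decidable c} {i2 : Decidable d}
    (h : c ↔ d) (x y : α) : (@ite _ c i1 x y) = (@ite _ d i2 x y) := by
  rcases i1 with h1 | h1 <;> rcases i2 with h2 | h2 <;> simp_all

/-- Exchangeability transfer to the regime counterfactual: under joint
conditional independence `(Y⁰, Y¹) ⊥ A | Z`, the mean of the regime
counterfactual `Y^h = Σ_a 1{h(Z,A) = a} Yᵃ` is identified from conditional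
means of the static counterfactuals given `Z`. -/
theorem exchangeability_transfer {Z' : Type*} [Fintype Z']
    (p : Ω → ℝ) (hp : ∀ ω, 0 ≤ p ω) (hp1 : ∑ ω, p ω = 1)
    (Ycf : Bool → Ω → ℝ) (A : Ω → Bool) (Z : Ω → Z') (h : Z' → Bool → Bool)
    -- every value of Z has positive probability
    (hZ : ∀ z : Z', 0 < Pr p (fun ω => Z ω = z))
    -- joint conditional independence (Y⁰, Y¹) ⊥ A | Z
    (hci : ∀ (v0 v1 : ℝ) (a : Bool) (z : Z'),
      Pr p (fun ω => (Ycf false ω = v0 ∧ Ycf true ω = v1) ∧ A ω = a ∧ Z ω = z) *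
        Pr p (fun ω => Z ω = z) =
      Pr p (fun ω => (Ycf false ω = v0 ∧ Ycf true ω = v1) ∧ Z ω = z) *
        Pr p (fun ω => A ω = a ∧ Z ω = z)) :
    Ex p (fun ω => ∑ a : Bool, (if h (Z ω) (A ω) = a then (1 : ℝ) else 0) * Ycf a ω) =
      Ex p (fun ω => ∑ a : Bool, (if A ω = a then (1 : ℝ) else 0) *
        CE p (Ycf (h (Z ω) a)) (fun ω' => Z ω' = Z ω)) ∧
    Ex p (fun ω => ∑ a : Bool, (if h (Z ω) (A ω) = a then (1 : ℝ) else 0) * Ycf a ω) =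
      ∑ z : Z', ∑ a : Bool, Pr p (fun ω => Z ω = z ∧ A ω = a) *
        CE p (Ycf (h z a)) (fun ω => Z ω = z) := by
  classical
  set V : Finset (ℝ × ℝ) := Finset.image (fun ω => (Ycf false ω, Ycf true ω)) Finset.univ
    with hVdef
  -- decomposition of a weighted sum over the joint values of (Y⁰, Y¹)
  have decomp : ∀ (b : Bool) (E : Ω → Prop) (inst : ∀ ω, Decidable (E ω)),
      (∑ ω, @ite _ (E ω) (inst ω) (p ω * Ycf b ω) 0)
        = ∑ v ∈ V, (if b then v.2 else v.1) *
            Pr p (fun ω => (Ycf false ω = v.1 ∧ Ycf true ω = v.2) ∧ E ω) := by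
    intro b E inst
    unfold Pr
    simp_rw [Finset.mul_sum]
    rw [Finset.sum_comm]
    refine Finset.sum_congr rfl fun ω _ => ?_
    by_cases hE : E ω
    · rw [Finset.sum_eq_single (Ycf false ω, Ycf true ω)]
      · cases b <;> simp [hE, mul_comm]
      · intro v hv hne
        have hne' : ¬ (Ycf false ω = v.1 ∧ Ycf true ω = v.2) := by
          rintro ⟨h1, h2⟩
          exact hne (by rw [Prod.ext_iff]; exact ⟨h1.symm, h2.symm⟩)
        simp [hne']
      · intro hmem
        exact absurd (Finset.mem_image_of_mem _ (Finset.mem_univ ω)) hmem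
    · simp [hE]
  -- the key identification step from conditional independence
  have key : ∀ (b a : Bool) (z : Z'),
      (∑ ω, if A ω = a ∧ Z ω = z then p ω * Ycf b ω else 0)
        = Pr p (fun ω => A ω = a ∧ Z ω = z) * CE p (Ycf b) (fun ω => Z ω = z) := by
    intro b a z
    have hZz : Pr p (fun ω => Z ω = z) ≠ 0 := ne_of_gt (hZ z)
    have main : (∑ ω, if A ω = a ∧ Z ω = z then p ω * Ycf b ω else 0)
          * Pr p (fun ω => Z ω = z)
        = (∑ ω, if Z ω = z then p ω * Ycf b ω else 0)
          * Pr p (fun ω => A ω = a ∧ Z ω = z) := by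
      have d1 := decomp b (fun ω => A ω = a ∧ Z ω = z) (fun ω => inferInstance)
      have d2 := decomp b (fun ω => Z ω = z) (fun ω => inferInstance)
      rw [d1, d2, Finset.sum_mul, Finset.sum_mul]
      refine Finset.sum_congr rfl fun v _ => ?_
      rw [mul_assoc, mul_assoc, hci v.1 v.2 a z]
    unfold CE
    rw [← mul_div_assoc, eq_div_iff hZz, main, mul_comm]
  -- inner Bool-sum simplification
  have ind : ∀ (c : Bool) (f : Bool → ℝ),
      (∑ a : Bool, (if c = a then (1 : ℝ) else 0) * f a) = f c := by
    intro c f; cases c <;> simp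
  -- partition a sum over Ω according to the values of Z and A
  have split : ∀ f : Ω → ℝ,
      (∑ ω, f ω) = ∑ z : Z', ∑ a : Bool, ∑ ω, if A ω = a ∧ Z ω = z then f ω else 0 := by
    intro f
    have step1 : (∑ z : Z', ∑ a : Bool, ∑ ω, if A ω = a ∧ Z ω = z then f ω else 0)
        = ∑ z : Z', ∑ ω, ∑ a : Bool, if A ω = a ∧ Z ω = z then f ω else 0 :=
      Finset.sum_congr rfl fun z _ => Finset.sum_comm
    rw [eq_comm, step1, Finset.sum_comm]
    refine Finset.sum_congr rfl fun ω _ => ?_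
    have hz : ∀ z : Z', (∑ a : Bool, if A ω = a ∧ Z ω = z then f ω else 0)
        = if Z ω = z then f ω else 0 := by
      intro z; cases hA : A ω <;> simp [Fintype.sum_bool]
    simp_rw [hz]
    simp [Finset.sum_ite_eq]
  -- rewrite both expectations as the common triple sum
  have lhs_eq : Ex p (fun ω => ∑ a : Bool,
        (if h (Z ω) (A ω) = a then (1 : ℝ) else 0) * Ycf a ω)
      = ∑ z : Z', ∑ a : Bool, Pr p (fun ω => Z ω = z ∧ A ω = a) *
          CE p (Ycf (h z a)) (fun ω => Z ω = z) := by
    unfold Ex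
    simp_rw [ind]
    rw [split (fun ω => p ω * Ycf (h (Z ω) (A ω)) ω)]
    refine Finset.sum_congr rfl fun z _ => Finset.sum_congr rfl fun a _ => ?_
    have h1 : (∑ ω, if A ω = a ∧ Z ω = z then p ω * Ycf (h (Z ω) (A ω)) ω else 0)
        = ∑ ω, if A ω = a ∧ Z ω = z then p ω * Ycf (h z a) ω else 0 := by
      refine Finset.sum_congr rfl fun ω _ => ?_
      by_cases hc : A ω = a ∧ Z ω = z
      · rw [if_pos hc, if_pos hc, hc.1, hc.2]
      · rw [if_neg hc, if_neg hc]
    have h2 : Pr p (fun ω => Z ω = z ∧ A ω = a) = Pr p (fun ω => A ω = a ∧ Z ω = z) := by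
      unfold Pr
      exact Finset.sum_congr rfl fun ω _ => ite_iff_congr and_comm _ _
    rw [h1, key (h z a) a z, h2]
  refine ⟨?_, lhs_eq⟩
  rw [lhs_eq]
  unfold Ex
  simp_rw [ind]
  rw [split (fun ω => p ω * CE p (Ycf (h (Z ω) (A ω))) (fun ω' => Z ω' = Z ω))]
  refine Finset.sum_congr rfl fun z _ => Finset.sum_congr rfl fun a _ => ?_
  have h1 : (∑ ω, if A ω = a ∧ Z ω = z then
        p ω * CE p (Ycf (h (Z ω) (A ω))) (fun ω' => Z ω' = Z ω) else 0)
      = ∑ ω, if A ω = a ∧ Z ω = z then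
          p ω * CE p (Ycf (h z a)) (fun ω' => Z ω' = z) else 0 := by
    refine Finset.sum_congr rfl fun ω _ => ?_
    by_cases hc : A ω = a ∧ Z ω = z
    · simp only [if_pos hc, hc.1, hc.2]
    · simp only [if_neg hc]
  have h2 : Pr p (fun ω => Z ω = z ∧ A ω = a) = Pr p (fun ω => A ω = a ∧ Z ω = z) := by
    unfold Pr
    exact Finset.sum_congr rfl fun ω _ => ite_iff_congr and_comm _ _
  rw [h1, h2]
  unfold Pr
  rw [Finset.sum_mul]
  refine Finset.sum_congr rfl fun ω _ => ?_
  by_cases hc : A ω = a ∧ Z ω = z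
  · simp [hc, mul_comm]
  · simp [hc]
end
end
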